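/- arXiv:2603.28359 — 3 statements merged into one kernel-verified Lean document; each statement's English description precedes it below -/
import Mathlib

section
/- Let w be a real random variable with E[w] = 0 and P(|w| > t) = c·t^{−α}·(1 + o(1)) as t → ∞ for some α ∈ (1,2), c > 0. With τ_n = n^{1/α} and σ_n² = E[(w^{(τ_n)})²], the normalized relative fourth moment satisfies n^{−1}·E[(w^{(τ_n)})⁴] / (σ_n²)² → (2−α)²/(c(4−α)) as n → ∞; in particular this quantity converges to a strictly positive constant and does not tend to zero, so the standard fourth-moment (Chebyshev) method is exactly borderline for proving concentration of the empirical Winsorized second moment. -/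
open Filter MeasureTheory ProbabilityTheory

/-- Winsorization at level `τ`: `w^{(τ)} = w·1{|w| ≤ τ} + τ·sign(w)·1{|w| > τ}`. -/
noncomputable def winsor (τ x : ℝ) : ℝ := max (-τ) (min τ x)

/-!
By the layer-cake formula, `E[|w^{(τ)}|^p] = p ∫₀^τ t^{p-1} P(|w| > t) dt`. Writing
`P(|w| > t) = t^{-α} h(t)` with `h → c` and substituting `t = τu`, this equals
`p τ^{p-α} ∫₀¹ u^{p-1-α} h(τu) du`, and dominated convergence (the weight `u^{p-1-α}` is
integrable on `(0,1]` as soon as `p > α`) gives `E[|w^{(τ)}|^p] ~ p c τ^{p-α}/(p-α)`.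
For `p = 4` and `p = 2` and `τ^α = n` the powers of `τ` cancel in
`n⁻¹ E[(w^{(τ)})⁴] / E[(w^{(τ)})²]²`, leaving `(4c/(4-α)) / (2c/(2-α))²`.
-/

open Set Topology

theorem abs_winsor {τ : ℝ} (hτ : 0 ≤ τ) (x : ℝ) : |winsor τ x| = min τ |x| := by
  unfold winsor
  rcases le_total 0 x with hx | hx
  · rw [max_eq_right (by linarith [le_min hτ hx]), abs_of_nonneg (le_min hτ hx), abs_of_nonneg hx]
  · rw [min_eq_right (hx.trans hτ), abs_of_nonpos (max_le (by linarith) hx), abs_of_nonpos hx,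
      ← min_neg_neg, neg_neg]

namespace MeasureTheory

variable {X : Type*} [MeasurableSpace X] {μ : Measure X}

theorem Integrable.integral_rpow_eq_integral_meas_lt_mul {f : X → ℝ} {p : ℝ} (hp : 0 < p)
    (f_nn : 0 ≤ᵐ[μ] f) (hf : Integrable (fun ω ↦ f ω ^ p) μ) :
    ∫ ω, f ω ^ p ∂μ = ∫ t in Ioi 0, p * t ^ (p - 1) * μ.real {a | t < f a} := by
  rw [hf.integral_eq_integral_meas_lt (f_nn.mono fun ω h ↦ Real.rpow_nonneg h p),
    ← integral_comp_rpow_Ioi_of_pos hp]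
  refine setIntegral_congr_fun measurableSet_Ioi fun t (ht : 0 < t) ↦ ?_
  have : {a | t ^ p < f a ^ p} =ᵐ[μ] {a | t < f a} :=
    f_nn.mono fun a ha ↦ propext (Real.rpow_lt_rpow_iff ht.le ha hp)
  rw [smul_eq_mul, measureReal_congr this]

end MeasureTheory

theorem integral_abs_winsor_rpow {Ω : Type*} [MeasurableSpace Ω] {μ : Measure Ω}
    [IsFiniteMeasure μ] {w : Ω → ℝ} (hw : AEMeasurable w μ) {τ p : ℝ} (hτ : 0 ≤ τ) (hp : 0 < p) :
    ∫ ω, |winsor τ (w ω)| ^ p ∂μ = ∫ t in 0..τ, p * t ^ (p - 1) * μ.real {ω | t < |w ω|} := by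
  simp_rw [abs_winsor hτ]
  have hbdd : ∀ ω, ‖min τ |w ω| ^ p‖ ≤ τ ^ p := fun ω ↦ by
    rw [Real.norm_of_nonneg (by positivity)]
    exact Real.rpow_le_rpow (by positivity) (min_le_left _ _) hp.le
  have hint : Integrable (fun ω ↦ min τ |w ω| ^ p) μ :=
    (integrable_const (τ ^ p)).mono'
      ((aemeasurable_const.min hw.abs).pow_const p).aestronglyMeasurable (ae_of_all _ hbdd)
  rw [hint.integral_rpow_eq_integral_meas_lt_mul hp (ae_of_all _ fun ω ↦ by positivity),
    intervalIntegral.integral_of_le hτ, integral_Ioc_eq_integral_Ioo,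
    setIntegral_eq_of_subset_of_forall_sdiff_eq_zero measurableSet_Ioi Ioo_subset_Ioi_self]
  · refine setIntegral_congr_fun measurableSet_Ioo fun t ht ↦ ?_
    simp only [lt_min_iff, ht.2, true_and]
  · rintro t ⟨ht, htτ⟩
    have hτt : τ ≤ t := le_of_not_gt fun h ↦ htτ ⟨ht, h⟩
    simp [hτt.not_gt]

theorem Antitone.exists_forall_abs_rpow_mul_le {G : ℝ → ℝ} {α c : ℝ} (hG : Antitone G)
    (hα : 0 ≤ α) (htail : Tendsto (fun t ↦ t ^ α * G t) atTop (𝓝 c)) :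
    ∃ M, ∀ t, 0 < t → |t ^ α * G t| ≤ M := by
  obtain ⟨T, hT⟩ := eventually_atTop.1 (htail.abs.eventually (eventually_le_nhds (lt_add_one |c|)))
  refine ⟨max (|c| + 1) (|T| ^ α * max |G T| |G 0|), fun t ht ↦ ?_⟩
  rcases le_or_gt T t with hTt | htT
  · exact le_max_of_le_left (hT t hTt)
  · refine le_max_of_le_right ?_
    rw [abs_mul, abs_of_pos (Real.rpow_pos_of_pos ht α)]
    refine mul_le_mul (Real.rpow_le_rpow ht.le (htT.trans_le (le_abs_self T)).le hα) ?_
      (abs_nonneg _) (by positivity)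
    exact abs_le_max_abs_abs (hG htT.le) (hG ht.le)

theorem rpow_sub_mul_integral_eq_integral_comp_mul {G : ℝ → ℝ} {α p τ : ℝ} (hτ : 0 < τ) :
    τ ^ (α - p) * ∫ t in 0..τ, t ^ (p - 1) * G t
      = ∫ u in 0..1, u ^ (p - 1 - α) * ((τ * u) ^ α * G (τ * u)) := by
  have hscale : ∀ u, 0 < u → u ^ (p - 1 - α) * ((τ * u) ^ α * G (τ * u))
      = τ ^ (α - p) * τ * ((τ * u) ^ (p - 1) * G (τ * u)) := fun u hu ↦ by
    rw [Real.mul_rpow hτ.le hu.le, Real.mul_rpow hτ.le hu.le]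
    have hu' : u ^ (p - 1 - α) * u ^ α = u ^ (p - 1) := by rw [← Real.rpow_add hu]; ring_nf
    have hτ' : τ ^ (α - p) * τ * τ ^ (p - 1) = τ ^ α := by
      conv_rhs => rw [show α = α - p + 1 + (p - 1) by ring]
      rw [Real.rpow_add hτ, Real.rpow_add hτ, Real.rpow_one]
    linear_combination (G (τ * u)) * (τ ^ α * hu' - u ^ (p - 1) * hτ')
  rw [intervalIntegral.integral_congr_ae (ae_of_all _ fun u hu ↦ hscale u (by simpa using hu.1)),
    intervalIntegral.integral_const_mul,
    intervalIntegral.integral_comp_mul_left (fun t ↦ t ^ (p - 1) * G t) hτ.ne', mul_zero, mul_one,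
    smul_eq_mul, mul_assoc, mul_inv_cancel_left₀ hτ.ne']

theorem tendsto_integral_rpow_mul_comp_mul_atTop {h : ℝ → ℝ} {r c M : ℝ} (hr : -1 < r)
    (hh : Measurable h) (hM : ∀ t, 0 < t → |h t| ≤ M) (hlim : Tendsto h atTop (𝓝 c)) :
    Tendsto (fun τ ↦ ∫ u in 0..1, u ^ r * h (τ * u)) atTop (𝓝 (c / (r + 1))) := by
  have hval : ∫ u in (0 : ℝ)..1, u ^ r * c = c / (r + 1) := by
    rw [intervalIntegral.integral_mul_const, integral_rpow (Or.inl hr),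
      Real.zero_rpow (by linarith), Real.one_rpow, sub_zero, one_div, inv_mul_eq_div]
  rw [← hval]
  refine intervalIntegral.tendsto_integral_filter_of_dominated_convergence (fun u ↦ u ^ r * M)
    (Eventually.of_forall fun τ ↦ ((measurable_id.pow_const r).mul
      (hh.comp (measurable_const.mul measurable_id))).aestronglyMeasurable) ?_
    ((intervalIntegral.intervalIntegrable_rpow' hr).mul_const M) ?_
  · filter_upwards [eventually_gt_atTop 0] with τ hτ
    refine ae_of_all _ fun u hu ↦ ?_
    rw [uIoc_of_le zero_le_one] at hu
    rw [norm_mul, Real.norm_of_nonneg (Real.rpow_nonneg hu.1.le r), Real.norm_eq_abs]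
    exact mul_le_mul_of_nonneg_left (hM _ (mul_pos hτ hu.1)) (Real.rpow_nonneg hu.1.le r)
  · refine ae_of_all _ fun u hu ↦ ?_
    rw [uIoc_of_le zero_le_one] at hu
    exact (hlim.comp (tendsto_id.atTop_mul_const hu.1)).const_mul _

theorem tendsto_rpow_sub_mul_integral_rpow_mul_of_tendsto {G : ℝ → ℝ} {α p c : ℝ} (hα : 0 < α)
    (hαp : α < p) (hG : Antitone G) (htail : Tendsto (fun t ↦ t ^ α * G t) atTop (𝓝 c)) :
    Tendsto (fun τ ↦ τ ^ (α - p) * ∫ t in 0..τ, t ^ (p - 1) * G t) atTop (𝓝 (c / (p - α))) := by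
  obtain ⟨M, hM⟩ := hG.exists_forall_abs_rpow_mul_le hα.le htail
  have hlim := tendsto_integral_rpow_mul_comp_mul_atTop (r := p - 1 - α) (by linarith)
    ((measurable_id.pow_const α).mul hG.measurable) hM htail
  rw [show p - 1 - α + 1 = p - α by ring] at hlim
  refine hlim.congr' ?_
  filter_upwards [eventually_gt_atTop 0] with τ hτ
  exact (rpow_sub_mul_integral_eq_integral_comp_mul hτ).symm

theorem tendsto_rpow_sub_mul_integral_winsor_pow {Ω : Type*} [MeasurableSpace Ω]
    {μ : Measure Ω} [IsFiniteMeasure μ] {w : Ω → ℝ} (hw : AEMeasurable w μ) {α c : ℝ}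
    (hα : 0 < α) {k : ℕ} (hk : Even k) (hαk : α < k)
    (htail : Tendsto (fun t ↦ t ^ α * μ.real {ω | t < |w ω|}) atTop (𝓝 c)) :
    Tendsto (fun τ ↦ τ ^ (α - k) * ∫ ω, winsor τ (w ω) ^ k ∂μ) atTop
      (𝓝 (k * c / (k - α))) := by
  have hk_pos : (0 : ℝ) < k := hα.trans hαk
  have hG : Antitone fun t ↦ μ.real {ω | t < |w ω|} :=
    fun s t hst ↦ measureReal_mono fun ω hω ↦ hst.trans_lt hω
  rw [mul_div_assoc]
  refine ((tendsto_rpow_sub_mul_integral_rpow_mul_of_tendsto hα hαk hG htail).const_mul _).congr' ?_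
  filter_upwards [eventually_ge_atTop 0] with τ hτ
  have hpow : ∀ x : ℝ, x ^ k = |x| ^ (k : ℝ) := fun x ↦ by rw [Real.rpow_natCast, hk.pow_abs]
  simp_rw [hpow, integral_abs_winsor_rpow hw hτ hk_pos, mul_assoc,
    intervalIntegral.integral_const_mul, mul_left_comm]

theorem winsorized_relative_fourth_moment_borderline_general
    {Ω : Type*} [MeasurableSpace Ω] (μ : Measure Ω) [IsProbabilityMeasure μ]
    (w : Ω → ℝ) (hw : Measurable w)
    (α c : ℝ) (hα₁ : 1 < α) (hα₂ : α < 2) (hc : 0 < c)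
    (htail : Tendsto (fun t : ℝ => t ^ α * (μ {ω | t < |w ω|}).toReal)
      atTop (nhds c)) :
    Tendsto (fun n : ℕ =>
        ((n : ℝ)⁻¹ * ∫ ω, (winsor ((n : ℝ) ^ (1 / α)) (w ω)) ^ 4 ∂μ) /
          (∫ ω, (winsor ((n : ℝ) ^ (1 / α)) (w ω)) ^ 2 ∂μ) ^ 2)
      atTop (nhds ((2 - α) ^ 2 / (c * (4 - α))))
    ∧ 0 < (2 - α) ^ 2 / (c * (4 - α)) := by
  have hα : 0 < α := by linarith
  refine ⟨?_, div_pos (pow_pos (by linarith) 2) (mul_pos hc (by linarith))⟩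
  have h2 := tendsto_rpow_sub_mul_integral_winsor_pow hw.aemeasurable hα even_two
    (by norm_num; linarith) htail
  have h4 := tendsto_rpow_sub_mul_integral_winsor_pow hw.aemeasurable hα (k := 4) (by decide)
    (by norm_num; linarith) htail
  push_cast at h2 h4
  have hτ : Tendsto (fun n : ℕ ↦ (n : ℝ) ^ (1 / α)) atTop atTop :=
    (tendsto_rpow_atTop (by positivity)).comp tendsto_natCast_atTop_atTop
  have hratio := (h4.div (h2.pow 2) (by positivity)).comp hτ
  rw [show 4 * c / (4 - α) / (2 * c / (2 - α)) ^ 2 = (2 - α) ^ 2 / (c * (4 - α)) by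
    field_simp; ring] at hratio
  refine hratio.congr' ?_
  filter_upwards [eventually_gt_atTop 0] with n hn
  have hτn : 0 < (n : ℝ) ^ (1 / α) := by positivity
  have hnτ : ((n : ℝ) ^ (1 / α)) ^ α = n := by
    rw [← Real.rpow_mul n.cast_nonneg, one_div_mul_cancel hα.ne', Real.rpow_one]
  simp only [Function.comp_apply, Pi.div_apply, Real.rpow_sub hτn, hnτ, Real.rpow_ofNat]
  field_simp

/-- **The fourth-moment method is exactly borderline.**
Under the regularly-varying tail assumption with `α ∈ (1,2)`, `c > 0`, with
`τ_n = n^{1/α}` and `σ_n² = E[(w^{(τ_n)})²]`, the normalized relative fourth moment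
`n^{-1} E[(w^{(τ_n)})⁴] / (σ_n²)²` converges to the strictly positive constant
`(2-α)²/(c(4-α))`; in particular it does not tend to zero. -/
theorem winsorized_relative_fourth_moment_borderline
    {Ω : Type*} [MeasurableSpace Ω] (μ : Measure Ω) [IsProbabilityMeasure μ]
    (w : Ω → ℝ) (hw : Measurable w)
    (α c : ℝ) (hα₁ : 1 < α) (hα₂ : α < 2) (hc : 0 < c)
    (hint : Integrable w μ) (hmean : ∫ ω, w ω ∂μ = 0)
    (htail : Tendsto (fun t : ℝ => t ^ α * (μ {ω | t < |w ω|}).toReal)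
      atTop (nhds c)) :
    Tendsto (fun n : ℕ =>
        ((n : ℝ)⁻¹ * ∫ ω, (winsor ((n : ℝ) ^ (1 / α)) (w ω)) ^ 4 ∂μ) /
          (∫ ω, (winsor ((n : ℝ) ^ (1 / α)) (w ω)) ^ 2 ∂μ) ^ 2)
      atTop (nhds ((2 - α) ^ 2 / (c * (4 - α))))
    ∧ 0 < (2 - α) ^ 2 / (c * (4 - α)) :=
  winsorized_relative_fourth_moment_borderline_general μ w hw α c hα₁ hα₂ hc htail
end

section
/- Let w be a real random variable with E[w] = 0 and P(|w| > t) = c·t^{−α}·(1 + o(1)) as t → ∞ for some α ∈ (1,2), c > 0. With τ_n = n^{1/α} and σ_n² = E[(w^{(τ_n)})²], the total Fisher-information proxy I_n = n/σ_n² satisfies I_n / n^{(2α−2)/α} → (2−α)/(2c) as n → ∞; in particular, since (2α−2)/α > 0 for α > 1, I_n → ∞. (Theorem 3.2: the data become increasingly informative even though the effective variance diverges.) -/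
/-!
By the layer-cake formula the winsorized second moment is `σ²(τ) = ∫₀^τ 2t P(|w| > t) dt`.
The integrand is asymptotic to `2c t^{1-α}`, whose integral diverges because `α < 2`, so
integrating the equivalence gives `σ²(τ) ~ 2c τ^{2-α} / (2-α)`. At `τ = n^{1/α}` this reads
`σ_n² ~ 2c n^{(2-α)/α} / (2-α)`, and `n / n^{(2α-2)/α} = n^{(2-α)/α}`.
-/

open Filter MeasureTheory ProbabilityTheory

open Set Asymptotics Topology

namespace Asymptotics

theorem IsLittleO.intervalIntegral_atTop {E : Type*} [NormedAddCommGroup E] [NormedSpace ℝ E]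
    {f : ℝ → E} {g : ℝ → ℝ} {a : ℝ}
    (hf : ∀ x, IntervalIntegrable f volume a x) (hg : ∀ x, IntervalIntegrable g volume a x)
    (hg₀ : ∀ᶠ t in atTop, 0 ≤ g t) (hG : Tendsto (fun x ↦ ∫ t in a..x, g t) atTop atTop)
    (h : f =o[atTop] g) :
    (fun x ↦ ∫ t in a..x, f t) =o[atTop] fun x ↦ ∫ t in a..x, g t := by
  refine isLittleO_iff.2 fun ε hε ↦ ?_
  obtain ⟨U, hU⟩ := eventually_atTop.1 ((isLittleO_iff.1 h (half_pos hε)).and hg₀)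
  -- beyond `U` the integrand is `ε/2`-small; what comes before is a constant, swamped by `∫ g`
  set C := ‖∫ t in a..U, f t‖ + ε / 2 * |∫ t in a..U, g t| with hC
  filter_upwards [eventually_ge_atTop U, hG.eventually_ge_atTop (2 * C / ε)] with x hxU hxC
  have hfx : ‖∫ t in U..x, f t‖ ≤ ε / 2 * ∫ t in U..x, g t := by
    rw [← intervalIntegral.integral_const_mul]
    refine intervalIntegral.norm_integral_le_of_norm_le hxU
      (ae_of_all _ fun t ht ↦ ?_) (((hg U).symm.trans (hg x)).const_mul _)
    obtain ⟨hft, hgt⟩ := hU t ht.1.le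
    simpa [Real.norm_of_nonneg hgt] using hft
  have hsplit : ∫ t in a..x, g t = (∫ t in a..U, g t) + ∫ t in U..x, g t :=
    (intervalIntegral.integral_add_adjacent_intervals (hg U) ((hg U).symm.trans (hg x))).symm
  calc ‖∫ t in a..x, f t‖
      = ‖(∫ t in a..U, f t) + ∫ t in U..x, f t‖ := by
        rw [intervalIntegral.integral_add_adjacent_intervals (hf U)
          ((hf U).symm.trans (hf x))]
    _ ≤ C + ε / 2 * ∫ t in a..x, g t := by
        rw [hsplit, hC]
        nlinarith [norm_add_le (∫ t in a..U, f t) (∫ t in U..x, f t),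
          neg_abs_le (∫ t in a..U, g t)]
    _ ≤ ε * ‖∫ t in a..x, g t‖ := by
        rw [div_le_iff₀ hε] at hxC
        have := le_abs_self (∫ t in a..x, g t)
        rw [Real.norm_eq_abs]
        nlinarith

theorem IsEquivalent.intervalIntegral_atTop {f g : ℝ → ℝ} {a : ℝ}
    (hf : ∀ x, IntervalIntegrable f volume a x) (hg : ∀ x, IntervalIntegrable g volume a x)
    (hg₀ : ∀ᶠ t in atTop, 0 ≤ g t) (hG : Tendsto (fun x ↦ ∫ t in a..x, g t) atTop atTop)
    (h : f ~[atTop] g) :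
    (fun x ↦ ∫ t in a..x, f t) ~[atTop] fun x ↦ ∫ t in a..x, g t := by
  refine (h.isLittleO.intervalIntegral_atTop (fun x ↦ (hf x).sub (hg x)) hg hg₀ hG).congr_left
    fun x ↦ ?_
  exact intervalIntegral.integral_sub (hf x) (hg x)

end Asymptotics

theorem intervalIntegral_two_mul_mul_isEquivalent_rpow {p : ℝ → ℝ} {α c : ℝ}
    (hα : α < 2) (hc : 0 < c)
    (hp : ∀ x, IntervalIntegrable p volume 0 x)
    (h : Tendsto (fun t ↦ t ^ α * p t) atTop (𝓝 c)) :
    (fun x ↦ ∫ t in 0..x, 2 * t * p t) ~[atTop] fun x ↦ 2 * c / (2 - α) * x ^ (2 - α) := by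
  have h2α : 0 < 2 - α := by linarith
  have hintegral : ∀ x, ∫ t in 0..x, 2 * c * t ^ (1 - α) = 2 * c / (2 - α) * x ^ (2 - α) := by
    intro x
    rw [intervalIntegral.integral_const_mul, integral_rpow (Or.inl (by linarith)),
      show 1 - α + 1 = 2 - α by ring, Real.zero_rpow h2α.ne']
    ring
  have hequiv : (fun t ↦ 2 * t * p t) ~[atTop] fun t ↦ 2 * c * t ^ (1 - α) := by
    refine isEquivalent_of_tendsto_one ?_
    rw [← div_self hc.ne']
    refine (h.div_const c).congr' ?_
    filter_upwards [eventually_gt_atTop 0] with t ht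
    have : t ^ α * t ^ (1 - α) = t := by
      rw [← Real.rpow_add ht, add_sub_cancel, Real.rpow_one]
    simp only [Pi.div_apply]
    field_simp
    linear_combination (p t) * this
  refine (hequiv.intervalIntegral_atTop
    (fun x ↦ (hp x).continuousOn_mul (by fun_prop))
    (fun x ↦ (intervalIntegral.intervalIntegrable_rpow' (by linarith)).const_mul _)
    ?_ ?_).congr_right (Eventually.of_forall hintegral)
  · filter_upwards [eventually_gt_atTop 0] with t ht
    positivity
  · simp_rw [hintegral]
    exact (tendsto_rpow_atTop h2α).const_mul_atTop (by positivity)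

theorem sq_winsor (τ x : ℝ) (hτ : 0 ≤ τ) : winsor τ x ^ 2 = min τ |x| ^ 2 := by
  unfold winsor
  rcases le_total 0 x with hx | hx
  · rw [abs_of_nonneg hx, max_eq_right (le_min (by linarith) (by linarith))]
  · rw [abs_of_nonpos hx, min_eq_right (by linarith : x ≤ τ)]
    rcases le_total τ (-x) with h | h
    · rw [min_eq_left h, max_eq_left (by linarith : x ≤ -τ)]; ring
    · rw [min_eq_right h, max_eq_right (by linarith : -τ ≤ x)]; ring

section LayerCake

variable {Ω : Type*} [MeasurableSpace Ω] (μ : Measure Ω) [IsFiniteMeasure μ]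

theorem antitone_measureReal_lt (X : Ω → ℝ) : Antitone fun t ↦ μ.real {ω | t < X ω} :=
  fun _ _ hst ↦ measureReal_mono fun _ hω ↦ hst.trans_lt hω

theorem lintegral_meas_lt_min_mul {X : Ω → ℝ} (τ : ℝ) :
    ∫⁻ t in Ioi 0, μ {ω | t < min τ (X ω)} * ENNReal.ofReal (2 * t) =
      ∫⁻ t in Ioo 0 τ, ENNReal.ofReal (2 * t * μ.real {ω | t < X ω}) := by
  rw [← Iio_inter_Ioi, ← Measure.restrict_restrict measurableSet_Iio,
    ← lintegral_indicator measurableSet_Iio]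
  refine setLIntegral_congr_fun measurableSet_Ioi fun t ht ↦ ?_
  by_cases htτ : t < τ
  · have : {ω | t < min τ (X ω)} = {ω | t < X ω} := by simp [htτ]
    rw [indicator_of_mem (show t ∈ Iio τ from htτ), this, measureReal_def,
      ENNReal.ofReal_mul (mul_pos two_pos ht).le, ENNReal.ofReal_toReal (measure_ne_top _ _),
      mul_comm]
  · have : {ω | t < min τ (X ω)} = ∅ := by
      ext ω; simp [htτ]
    rw [indicator_of_notMem (show t ∉ Iio τ from htτ), this, measure_empty, zero_mul]

theorem integral_min_abs_sq_eq_intervalIntegral {X : Ω → ℝ} (hX : AEMeasurable X μ) {τ : ℝ}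
    (hτ : 0 ≤ τ) :
    ∫ ω, min τ |X ω| ^ 2 ∂μ = ∫ t in 0..τ, 2 * t * μ.real {ω | t < |X ω|} := by
  have hF : IntervalIntegrable (fun t ↦ 2 * t * μ.real {ω | t < |X ω|}) volume 0 τ :=
    (antitone_measureReal_lt μ _).intervalIntegrable.continuousOn_mul (by fun_prop)
  have hF₀ : ∀ t ∈ Ioo 0 τ, 0 ≤ 2 * t * μ.real {ω | t < |X ω|} := fun t ht ↦ by
    have := ht.1; positivity
  have hbdd : Integrable (fun ω ↦ min τ |X ω| ^ 2) μ := by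
    refine (integrable_const (τ ^ 2)).mono'
      ((aemeasurable_const.min hX.abs).pow_const 2).aestronglyMeasurable (ae_of_all _ fun ω ↦ ?_)
    rw [Real.norm_eq_abs, abs_of_nonneg (sq_nonneg _)]
    exact pow_le_pow_left₀ (le_min hτ (abs_nonneg _)) (min_le_left _ _) 2
  have hlayer := lintegral_comp_eq_lintegral_meas_lt_mul μ (f := fun ω ↦ min τ |X ω|)
    (g := fun t ↦ 2 * t) (ae_of_all _ fun ω ↦ le_min hτ (abs_nonneg _))
    (aemeasurable_const.min hX.abs)
    (fun t _ ↦ (continuous_const_mul 2).intervalIntegrable 0 t)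
    ((ae_restrict_iff' measurableSet_Ioi).2 (ae_of_all _ fun t (ht : 0 < t) ↦ by positivity))
  rw [lintegral_meas_lt_min_mul] at hlayer
  rw [intervalIntegral.integral_of_le hτ, integral_Ioc_eq_integral_Ioo]
  refine (ENNReal.ofReal_eq_ofReal_iff (integral_nonneg fun _ ↦ sq_nonneg _)
    (setIntegral_nonneg measurableSet_Ioo hF₀)).1 ?_
  rw [ofReal_integral_eq_lintegral_ofReal hbdd (ae_of_all _ fun _ ↦ sq_nonneg _),
    ofReal_integral_eq_lintegral_ofReal (hF.1.mono_set Ioo_subset_Ioc_self)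
      ((ae_restrict_iff' measurableSet_Ioo).2 (ae_of_all _ hF₀)), ← hlayer]
  refine lintegral_congr fun ω ↦ ?_
  rw [intervalIntegral.integral_const_mul, integral_id]
  congr 1
  ring

end LayerCake

theorem integral_sq_winsor_isEquivalent {Ω : Type*} [MeasurableSpace Ω] (μ : Measure Ω)
    [IsFiniteMeasure μ] {X : Ω → ℝ} (hX : AEMeasurable X μ) {α c : ℝ} (hα : α < 2) (hc : 0 < c)
    (htail : Tendsto (fun t ↦ t ^ α * μ.real {ω | t < |X ω|}) atTop (𝓝 c)) :
    (fun τ ↦ ∫ ω, winsor τ (X ω) ^ 2 ∂μ) ~[atTop] fun τ ↦ 2 * c / (2 - α) * τ ^ (2 - α) := by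
  refine (intervalIntegral_two_mul_mul_isEquivalent_rpow hα hc
    (fun _ ↦ (antitone_measureReal_lt μ _).intervalIntegrable) htail).congr_left ?_
  filter_upwards [eventually_ge_atTop 0] with τ hτ
  simp only [sq_winsor _ _ hτ, integral_min_abs_sq_eq_intervalIntegral μ hX hτ]

theorem fisher_information_proxy_diverges_general
    {Ω : Type*} [MeasurableSpace Ω] (μ : Measure Ω) [IsProbabilityMeasure μ]
    (w : Ω → ℝ) (hw : Measurable w)
    (α c : ℝ) (hα₁ : 1 < α) (hα₂ : α < 2) (hc : 0 < c)
    (htail : Tendsto (fun t : ℝ => t ^ α * (μ {ω | t < |w ω|}).toReal)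
      atTop (nhds c)) :
    Tendsto (fun n : ℕ =>
        ((n : ℝ) / ∫ ω, (winsor ((n : ℝ) ^ (1 / α)) (w ω)) ^ 2 ∂μ) /
          (n : ℝ) ^ ((2 * α - 2) / α))
      atTop (nhds ((2 - α) / (2 * c)))
    ∧ 0 < (2 * α - 2) / α
    ∧ Tendsto (fun n : ℕ =>
        (n : ℝ) / ∫ ω, (winsor ((n : ℝ) ^ (1 / α)) (w ω)) ^ 2 ∂μ) atTop atTop := by
  have hα₀ : 0 < α := by linarith
  have hq : 0 < (2 * α - 2) / α := div_pos (by linarith) hα₀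
  set K := 2 * c / (2 - α) with hK
  have hK₀ : 0 < K := div_pos (by positivity) (by linarith)
  have hτ : Tendsto (fun n : ℕ ↦ (n : ℝ) ^ (1 / α)) atTop atTop :=
    (tendsto_rpow_atTop (by positivity)).comp tendsto_natCast_atTop_atTop
  have hσ := (integral_sq_winsor_isEquivalent μ hw.aemeasurable hα₂ hc htail).comp_tendsto hτ
  have hnormalized : ∀ᶠ n : ℕ in atTop,
      K⁻¹ = (n : ℝ) / (K * ((n : ℝ) ^ (1 / α)) ^ (2 - α)) / (n : ℝ) ^ ((2 * α - 2) / α) := by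
    filter_upwards [eventually_gt_atTop 0] with n hn
    have hn : (0 : ℝ) < n := by exact_mod_cast hn
    have : ((n : ℝ) ^ (1 / α)) ^ (2 - α) * (n : ℝ) ^ ((2 * α - 2) / α) = n := by
      rw [← Real.rpow_mul hn.le, ← Real.rpow_add hn,
        show 1 / α * (2 - α) + (2 * α - 2) / α = 1 by field_simp; ring, Real.rpow_one]
    rw [div_div, mul_assoc, this]
    field_simp
  have hlimit : Tendsto (fun n : ℕ ↦ ((n : ℝ) / ∫ ω, (winsor ((n : ℝ) ^ (1 / α)) (w ω)) ^ 2 ∂μ) /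
      (n : ℝ) ^ ((2 * α - 2) / α)) atTop (𝓝 K⁻¹) :=
    ((IsEquivalent.refl.div hσ).div IsEquivalent.refl).symm.tendsto_nhds
      (tendsto_const_nhds.congr' hnormalized)
  refine ⟨by rwa [hK, inv_div] at hlimit, hq, ?_⟩
  refine ((hlimit.pos_mul_atTop (inv_pos.2 hK₀)
    ((tendsto_rpow_atTop hq).comp tendsto_natCast_atTop_atTop)).congr' ?_)
  filter_upwards [eventually_gt_atTop 0] with n hn
  exact div_mul_cancel₀ _ (Real.rpow_pos_of_pos (Nat.cast_pos.2 hn) _).ne'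

/-- **Theorem 3.2 (The Fisher-information proxy diverges).**
Under the regularly-varying tail assumption with `α ∈ (1,2)`, `c > 0`, with
`τ_n = n^{1/α}` and `σ_n² = E[(w^{(τ_n)})²]`, the quantity `I_n = n/σ_n²` satisfies
`I_n / n^{(2α-2)/α} → (2-α)/(2c)`; in particular (since `(2α-2)/α > 0`)
`I_n → ∞`: the data become increasingly informative even though the effective
variance diverges. -/
theorem fisher_information_proxy_diverges
    {Ω : Type*} [MeasurableSpace Ω] (μ : Measure Ω) [IsProbabilityMeasure μ]
    (w : Ω → ℝ) (hw : Measurable w)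
    (α c : ℝ) (hα₁ : 1 < α) (hα₂ : α < 2) (hc : 0 < c)
    (hint : Integrable w μ) (hmean : ∫ ω, w ω ∂μ = 0)
    (htail : Tendsto (fun t : ℝ => t ^ α * (μ {ω | t < |w ω|}).toReal)
      atTop (nhds c)) :
    Tendsto (fun n : ℕ =>
        ((n : ℝ) / ∫ ω, (winsor ((n : ℝ) ^ (1 / α)) (w ω)) ^ 2 ∂μ) /
          (n : ℝ) ^ ((2 * α - 2) / α))
      atTop (nhds ((2 - α) / (2 * c)))
    ∧ 0 < (2 * α - 2) / α
    ∧ Tendsto (fun n : ℕ =>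
        (n : ℝ) / ∫ ω, (winsor ((n : ℝ) ^ (1 / α)) (w ω)) ^ 2 ∂μ) atTop atTop :=
  fisher_information_proxy_diverges_general μ w hw α c hα₁ hα₂ hc htail
end

section
/- Let μ be a probability measure on ℝ with compact support contained in (0, ∞), and let γ > 0 and m > 0. Then the equation 1/v = 1 + γ·∫ s/(s·v + m) dμ(s) has a unique solution v ∈ (0, 1]. (Existence and uniqueness of the companion Stieltjes fixed point v appearing in the closed-form ridge risk representation of Theorem 3.4.) -/
open Filter MeasureTheory Set

/-!
Multiplying the equation by `v > 0` turns it into `G v = 1` for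
`G v = v + γ ∫ s v / (s v + m) dμ(s)`. On `[0, ∞)` the integrand lies in `[0, 1)` and is
nondecreasing in `v`, so `G` is continuous and strictly increasing there, with `G 0 = 0` and
`G 1 ≥ 1`; the intermediate value theorem gives a root in `(0, 1]`, and strict monotonicity
makes it unique.
-/

noncomputable def fixedPointMap (μ : Measure ℝ) (γ m v : ℝ) : ℝ :=
  v + γ * ∫ s, s * v / (s * v + m) ∂μ

section Integrand

variable {s m v w : ℝ}

lemma mul_div_mul_add_nonneg (hs : 0 ≤ s) (hm : 0 < m) (hv : 0 ≤ v) :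
    0 ≤ s * v / (s * v + m) := by
  positivity

lemma norm_mul_div_mul_add_le_one (hs : 0 ≤ s) (hm : 0 < m) (hv : 0 ≤ v) :
    ‖s * v / (s * v + m)‖ ≤ 1 := by
  rw [Real.norm_of_nonneg (mul_div_mul_add_nonneg hs hm hv)]
  exact div_le_one_of_le₀ (by linarith) (by positivity)

lemma mul_div_mul_add_le_of_le (hs : 0 ≤ s) (hm : 0 < m) (hv : 0 ≤ v) (hvw : v ≤ w) :
    s * v / (s * v + m) ≤ s * w / (s * w + m) := by
  have hw : 0 ≤ w := hv.trans hvw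
  rw [div_le_div_iff₀ (by positivity) (by positivity)]
  nlinarith [mul_nonneg (mul_nonneg hs hm.le) (sub_nonneg.mpr hvw)]

lemma continuousOn_mul_div_mul_add (hs : 0 ≤ s) (hm : 0 < m) :
    ContinuousOn (fun v => s * v / (s * v + m)) (Ici 0) :=
  (continuous_const.mul continuous_id).continuousOn.div
    ((continuous_const.mul continuous_id).add continuous_const).continuousOn
    fun v (hv : 0 ≤ v) => by positivity

end Integrand

section Integral

variable {μ : Measure ℝ} {m : ℝ}

lemma integrable_mul_div_mul_add [IsFiniteMeasure μ] (hμ : ∀ᵐ s ∂μ, 0 ≤ s) (hm : 0 < m)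
    {v : ℝ} (hv : 0 ≤ v) : Integrable (fun s => s * v / (s * v + m)) μ := by
  refine (integrable_const 1).mono' (by fun_prop : Measurable _).aestronglyMeasurable ?_
  filter_upwards [hμ] with s hs
  exact norm_mul_div_mul_add_le_one hs hm hv

lemma continuousOn_integral_mul_div_mul_add [IsFiniteMeasure μ] (hμ : ∀ᵐ s ∂μ, 0 ≤ s)
    (hm : 0 < m) : ContinuousOn (fun v => ∫ s, s * v / (s * v + m) ∂μ) (Ici 0) := by
  refine continuousOn_of_dominated (bound := fun _ => 1)
    (fun v _ => (by fun_prop : Measurable _).aestronglyMeasurable)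
    (fun v (hv : 0 ≤ v) => ?_) (integrable_const 1) ?_
  · filter_upwards [hμ] with s hs
    exact norm_mul_div_mul_add_le_one hs hm hv
  · filter_upwards [hμ] with s hs
    exact continuousOn_mul_div_mul_add hs hm

lemma monotoneOn_integral_mul_div_mul_add [IsFiniteMeasure μ] (hμ : ∀ᵐ s ∂μ, 0 ≤ s)
    (hm : 0 < m) : MonotoneOn (fun v => ∫ s, s * v / (s * v + m) ∂μ) (Ici 0) := by
  intro v (hv : 0 ≤ v) w (hw : 0 ≤ w) hvw
  refine integral_mono_ae (integrable_mul_div_mul_add hμ hm hv)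
    (integrable_mul_div_mul_add hμ hm hw) ?_
  filter_upwards [hμ] with s hs
  exact mul_div_mul_add_le_of_le hs hm hv hvw

lemma integral_mul_div_mul_add_nonneg (hμ : ∀ᵐ s ∂μ, 0 ≤ s) (hm : 0 < m) {v : ℝ}
    (hv : 0 ≤ v) : 0 ≤ ∫ s, s * v / (s * v + m) ∂μ := by
  refine integral_nonneg_of_ae ?_
  filter_upwards [hμ] with s hs
  exact mul_div_mul_add_nonneg hs hm hv

end Integral

section FixedPointMap

variable {μ : Measure ℝ} {γ m : ℝ}

@[simp]
lemma fixedPointMap_zero : fixedPointMap μ γ m 0 = 0 := by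
  simp [fixedPointMap]

lemma one_le_fixedPointMap_one (hμ : ∀ᵐ s ∂μ, 0 ≤ s) (hγ : 0 ≤ γ) (hm : 0 < m) :
    1 ≤ fixedPointMap μ γ m 1 := by
  have := mul_nonneg hγ (integral_mul_div_mul_add_nonneg hμ hm zero_le_one)
  unfold fixedPointMap
  linarith

lemma continuousOn_fixedPointMap [IsFiniteMeasure μ] (hμ : ∀ᵐ s ∂μ, 0 ≤ s) (hm : 0 < m) :
    ContinuousOn (fixedPointMap μ γ m) (Ici 0) :=
  continuousOn_id.add (continuousOn_const.mul (continuousOn_integral_mul_div_mul_add hμ hm))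

lemma strictMonoOn_fixedPointMap [IsFiniteMeasure μ] (hμ : ∀ᵐ s ∂μ, 0 ≤ s) (hγ : 0 ≤ γ)
    (hm : 0 < m) : StrictMonoOn (fixedPointMap μ γ m) (Ici 0) := by
  intro v hv w hw hvw
  have := mul_le_mul_of_nonneg_left (monotoneOn_integral_mul_div_mul_add hμ hm hv hw hvw.le) hγ
  unfold fixedPointMap
  linarith

lemma one_div_eq_iff_fixedPointMap_eq_one {v : ℝ} (hv : 0 < v) :
    1 / v = 1 + γ * ∫ s, s / (s * v + m) ∂μ ↔ fixedPointMap μ γ m v = 1 := by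
  have hmul : (∫ s, s / (s * v + m) ∂μ) * v = ∫ s, s * v / (s * v + m) ∂μ := by
    rw [← integral_mul_const]
    simp only [div_mul_eq_mul_div]
  rw [div_eq_iff hv.ne', fixedPointMap, ← hmul]
  constructor <;> intro h <;> linear_combination -h

lemma existsUnique_fixedPointMap_eq_one [IsFiniteMeasure μ] (hμ : ∀ᵐ s ∂μ, 0 ≤ s)
    (hγ : 0 ≤ γ) (hm : 0 < m) : ∃! v, v ∈ Ioc (0 : ℝ) 1 ∧ fixedPointMap μ γ m v = 1 := by
  have hIcc : Icc (0 : ℝ) 1 ⊆ Ici 0 := fun v hv => hv.1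
  obtain ⟨v, hv, hGv⟩ := intermediate_value_Icc zero_le_one
    ((continuousOn_fixedPointMap hμ hm).mono hIcc)
    (show (1 : ℝ) ∈ Icc (fixedPointMap μ γ m 0) (fixedPointMap μ γ m 1) from
      ⟨fixedPointMap_zero.trans_le zero_le_one, one_le_fixedPointMap_one hμ hγ hm⟩)
  have hv0 : v ≠ 0 := by rintro rfl; simp at hGv
  refine ⟨v, ⟨⟨hv.1.lt_of_ne' hv0, hv.2⟩, hGv⟩, fun w ⟨hw, hGw⟩ => ?_⟩
  exact (strictMonoOn_fixedPointMap hμ hγ hm).injOn hw.1.le hv.1 (hGw.trans hGv.symm)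

end FixedPointMap

theorem stieltjes_fixed_point_exists_unique_general
    (μ : Measure ℝ) [IsProbabilityMeasure μ]
    (a b : ℝ) (ha : 0 < a)
    (hsupp : μ (Set.Icc a b)ᶜ = 0)
    (γ m : ℝ) (hγ : 0 < γ) (hm : 0 < m) :
    ∃! v : ℝ, v ∈ Set.Ioc (0 : ℝ) 1 ∧
      1 / v = 1 + γ * ∫ s, s / (s * v + m) ∂μ := by
  have hmem : ∀ᵐ s ∂μ, s ∈ Icc a b := mem_ae_iff.mpr hsupp
  have hμ : ∀ᵐ s ∂μ, 0 ≤ s := hmem.mono fun s hs => ha.le.trans hs.1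
  refine (existsUnique_congr fun v => ?_).mpr (existsUnique_fixedPointMap_eq_one hμ hγ.le hm)
  exact and_congr_right fun hv => one_div_eq_iff_fixedPointMap_eq_one hv.1

/-- **Existence and uniqueness of the companion Stieltjes fixed point (Theorem 3.4).**
Let `μ` be a probability measure on `ℝ` whose support is contained in a compact set
`[a,b] ⊂ (0,∞)`, and let `γ > 0`, `m > 0`.  Then the equation
`1/v = 1 + γ ∫ s/(s v + m) dμ(s)` has a unique solution `v ∈ (0, 1]`. -/
theorem stieltjes_fixed_point_exists_unique
    (μ : Measure ℝ) [IsProbabilityMeasure μ]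
    (a b : ℝ) (ha : 0 < a) (hab : a ≤ b)
    (hsupp : μ (Set.Icc a b)ᶜ = 0)
    (γ m : ℝ) (hγ : 0 < γ) (hm : 0 < m) :
    ∃! v : ℝ, v ∈ Set.Ioc (0 : ℝ) 1 ∧
      1 / v = 1 + γ * ∫ s, s / (s * v + m) ∂μ :=
  stieltjes_fixed_point_exists_unique_general μ a b ha hsupp γ m hγ hm
end
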